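/- Given partial preferences in the hybrid-query model, a matching M is necessarily Pareto optimal if and only if there exists a permutation σ of the agents such that for every completion ≻ of the partial preferences it holds that M = SD_≻(σ). -/

import Mathlib

/-!
Agents and houses are `Fin n`.  Hybrid-query partial preferences: revealed houses
`rev a` with injective rank values `rnk a h` (0-based).  A completion is a complete
strict profile, given by rank equivalences `P a : Fin n ≃ Fin n` (lower rank = more
preferred), agreeing with `rnk` on all revealed houses.  A matching is a bijection
`M : Equiv.Perm (Fin n)` from agents to houses.
-/

def Dominates {n : ℕ} (P : Fin n → (Fin n ≃ Fin n)) (M' M : Equiv.Perm (Fin n)) : Prop :=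
  (∀ a, P a (M' a) ≤ P a (M a)) ∧ ∃ a, P a (M' a) < P a (M a)

def ParetoOptimal {n : ℕ} (P : Fin n → (Fin n ≃ Fin n)) (M : Equiv.Perm (Fin n)) : Prop :=
  ¬ ∃ M' : Equiv.Perm (Fin n), Dominates P M' M

/-- `P` is a completion of the hybrid-query partial preferences `(rev, rnk)`. -/
def HQCompletion {n : ℕ} (rev : Fin n → Finset (Fin n)) (rnk : Fin n → Fin n → Fin n)
    (P : Fin n → (Fin n ≃ Fin n)) : Prop :=
  ∀ a, ∀ h ∈ rev a, P a h = rnk a h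

/-- `IsSD P σ M` says that `M` is the serial dictatorship matching `SD_≻(σ)` under
profile `P`: at every step `i` agent `σ i` is matched to the house it most prefers
among the houses not matched to `σ 0, …, σ (i-1)` (which are exactly `M (σ j)`
for `j ≥ i`, as `M` is a bijection). -/
def IsSD {n : ℕ} (P : Fin n → (Fin n ≃ Fin n)) (σ M : Equiv.Perm (Fin n)) : Prop :=
  ∀ i j : Fin n, i ≤ j → P (σ i) (M (σ i)) ≤ P (σ i) (M (σ j))

/-
Completions can be chosen independently for each agent. So if the agents could be permuted
along a nontrivial cycle in which each agent prefers, under some completion, the house of the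
next one, gluing these completions yields a profile under which the trade Pareto-dominates `M`.
Hence, for a necessarily Pareto optimal `M`, the relation "`a` may envy the house of `b`" has no
cycles; being on a finite set it is well-founded, and ordering agents by rank makes `M` the serial
dictatorship outcome under every completion. Conversely, a serial dictatorship outcome is Pareto
optimal: the first dictator whose house changes can only get a house it likes less.
-/

open Equiv

theorem exists_perm_ne_one_forall_rel_apply {α : Type*} [Finite α] {r : α → α → Prop}
    (hr : ∀ x, ¬ r x x) {s : Set α} (hs : s.Nonempty) (h : ∀ x ∈ s, ∃ y ∈ s, r x y) :
    ∃ g : Perm α, g ≠ 1 ∧ ∀ x, g x ≠ x → r x (g x) := by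
  classical
  -- A minimal such set is mapped onto itself by any choice of `r`-successors.
  obtain ⟨t, ⟨ht, htr⟩, hmin⟩ := wellFounded_lt.has_min
    {t : Set α | t.Nonempty ∧ ∀ x ∈ t, ∃ y ∈ t, r x y} ⟨s, hs, h⟩
  have hsucc : ∀ x, ∃ y, x ∈ t → y ∈ t ∧ r x y := fun x => by
    by_cases hx : x ∈ t
    · obtain ⟨y, hy, hxy⟩ := htr x hx
      exact ⟨y, fun _ => ⟨hy, hxy⟩⟩
    · exact ⟨x, fun hx' => (hx hx').elim⟩
  choose f hf using hsucc
  have hmaps : Set.MapsTo f t t := fun x hx => (hf x hx).1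
  have hsurj : Set.SurjOn f t t := by
    by_contra hns
    refine hmin (f '' t) ⟨ht.image f, ?_⟩ (hmaps.image_subset.ssubset_of_not_subset hns)
    rintro _ ⟨x, hx, rfl⟩
    exact ⟨f (f x), Set.mem_image_of_mem f (hf x hx).1, (hf (f x) (hf x hx).1).2⟩
  have hbij := (t.toFinite.surjOn_iff_bijOn_of_mapsTo hmaps).mp hsurj
  let g : Perm α := Perm.ofSubtype (hbij.equiv f)
  have hg : ∀ x ∈ t, g x = f x := fun x hx => Perm.ofSubtype_apply_of_mem _ hx
  refine ⟨g, fun hg1 => ?_, fun x hx => ?_⟩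
  · obtain ⟨x, hx⟩ := ht
    have hfx : f x = x := by rw [← hg x hx, hg1, Perm.one_apply]
    have hxx := (hf x hx).2
    rw [hfx] at hxx
    exact hr x hxx
  · have hxt : x ∈ t := by
      by_contra hxt
      exact hx (Perm.ofSubtype_apply_of_not_mem _ hxt)
    exact hg x hxt ▸ (hf x hxt).2

theorem exists_perm_lt_of_wellFounded {n : ℕ} {r : Fin n → Fin n → Prop} (hr : WellFounded r) :
    ∃ σ : Perm (Fin n), ∀ i j, r (σ i) (σ j) → i < j := by
  have : IsWellFounded (Fin n) r := ⟨hr⟩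
  refine ⟨Tuple.sort (IsWellFounded.rank r), fun i j hij => ?_⟩
  by_contra! hji
  exact (Tuple.monotone_sort (IsWellFounded.rank r) hji).not_gt (IsWellFounded.rank_lt_of_rel hij)

section SerialDictatorship

variable {n : ℕ} {P : Fin n → (Fin n ≃ Fin n)} {σ M : Perm (Fin n)}

theorem IsSD.eq_of_forall_le {M' : Perm (Fin n)} (hSD : IsSD P σ M)
    (hle : ∀ a, P a (M' a) ≤ P a (M a)) : M' = M := by
  suffices ∀ i, M' (σ i) = M (σ i) from Equiv.ext fun a => by simpa using this (σ⁻¹ a)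
  intro i
  induction i using WellFoundedLT.induction with
  | _ i ih =>
    -- `M' (σ i) = M (σ j)`, and `j < i` would make `M'` give this house to `σ j` as well.
    set j := σ⁻¹ (M⁻¹ (M' (σ i)))
    have hMj : M (σ j) = M' (σ i) := by simp [j]
    have hij : i ≤ j := by
      by_contra! hji
      exact hji.ne (σ.injective (M'.injective (by rw [ih j hji, hMj])))
    exact (P (σ i)).injective ((hle (σ i)).antisymm (hMj ▸ hSD i j hij))

theorem IsSD.paretoOptimal (hSD : IsSD P σ M) : ParetoOptimal P M := by
  rintro ⟨M', hle, a, hlt⟩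
  rw [hSD.eq_of_forall_le hle] at hlt
  exact hlt.false

end SerialDictatorship

/-- `C` is a product `∏ a, C a` of sets of preference orders, one set for each agent. -/
def IsRectangular {n : ℕ} (C : Set (Fin n → (Fin n ≃ Fin n))) : Prop :=
  ∀ Q : Fin n → Fin n → (Fin n ≃ Fin n), (∀ a, Q a ∈ C) → (fun a => Q a a) ∈ C

theorem isRectangular_setOf_hqCompletion {n : ℕ} (rev : Fin n → Finset (Fin n))
    (rnk : Fin n → Fin n → Fin n) : IsRectangular {P | HQCompletion rev rnk P} :=
  fun _ hQ a => hQ a a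

def MayEnvy {n : ℕ} (C : Set (Fin n → (Fin n ≃ Fin n))) (M : Perm (Fin n)) (a b : Fin n) :
    Prop :=
  ∃ P ∈ C, P a (M b) < P a (M a)

section Rectangular

variable {n : ℕ} {C : Set (Fin n → (Fin n ≃ Fin n))} {M : Perm (Fin n)}

theorem exists_dominates_of_forall_mayEnvy (hC : IsRectangular C) {g : Perm (Fin n)}
    (hg : g ≠ 1) (henvy : ∀ a, g a ≠ a → MayEnvy C M a (g a)) :
    ∃ P ∈ C, Dominates P (M * g) M := by
  obtain ⟨a₀, ha₀⟩ : ∃ a, g a ≠ a := by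
    by_contra! h
    exact hg (Equiv.ext h)
  obtain ⟨P₀, hP₀, -⟩ := henvy a₀ ha₀
  have hwitness : ∀ a, ∃ Q ∈ C, g a ≠ a → Q a (M (g a)) < Q a (M a) := fun a => by
    by_cases ha : g a = a
    · exact ⟨P₀, hP₀, fun h => (h ha).elim⟩
    · obtain ⟨Q, hQ, hlt⟩ := henvy a ha
      exact ⟨Q, hQ, fun _ => hlt⟩
  choose Q hQC hQ using hwitness
  refine ⟨fun a => Q a a, hC Q hQC, fun a => ?_, a₀, hQ a₀ ha₀⟩
  by_cases ha : g a = a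
  · simp [ha]
  · exact (hQ a ha).le

theorem wellFounded_flip_mayEnvy (hC : IsRectangular C) (hM : ∀ P ∈ C, ParetoOptimal P M) :
    WellFounded (flip (MayEnvy C M)) := by
  rw [WellFounded.wellFounded_iff_has_min]
  intro s hs
  by_contra! hcycle
  have hirr : ∀ a, ¬ MayEnvy C M a a := fun a ⟨_, _, hlt⟩ => hlt.false
  obtain ⟨g, hg, henvy⟩ := exists_perm_ne_one_forall_rel_apply hirr hs hcycle
  obtain ⟨P, hP, hdom⟩ := exists_dominates_of_forall_mayEnvy hC hg henvy
  exact hM P hP ⟨_, hdom⟩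

theorem forall_paretoOptimal_iff_exists_isSD (hC : IsRectangular C) :
    (∀ P ∈ C, ParetoOptimal P M) ↔ ∃ σ : Perm (Fin n), ∀ P ∈ C, IsSD P σ M := by
  refine ⟨fun hM => ?_, fun ⟨σ, hσ⟩ P hP => (hσ P hP).paretoOptimal⟩
  obtain ⟨σ, hσ⟩ := exists_perm_lt_of_wellFounded (wellFounded_flip_mayEnvy hC hM)
  refine ⟨σ, fun P hP i j hij => ?_⟩
  by_contra! hlt
  exact (hσ j i ⟨P, hP, hlt⟩).not_ge hij

end Rectangular

theorem npo_hybrid_iff_serialDictatorship_general {n : ℕ}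
    (rev : Fin n → Finset (Fin n)) (rnk : Fin n → Fin n → Fin n)
    (M : Equiv.Perm (Fin n)) :
    (∀ P : Fin n → (Fin n ≃ Fin n), HQCompletion rev rnk P → ParetoOptimal P M) ↔
      ∃ σ : Equiv.Perm (Fin n),
        ∀ P : Fin n → (Fin n ≃ Fin n), HQCompletion rev rnk P → IsSD P σ M :=
  forall_paretoOptimal_iff_exists_isSD (isRectangular_setOf_hqCompletion rev rnk)

/-- A matching is necessarily Pareto optimal for hybrid-query partial preferences iff
there is a single permutation `σ` of the agents such that `M` is the serial
dictatorship outcome for `σ` under every completion of the partial preferences. -/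
theorem npo_hybrid_iff_serialDictatorship {n : ℕ}
    (rev : Fin n → Finset (Fin n)) (rnk : Fin n → Fin n → Fin n)
    (hinj : ∀ a, Set.InjOn (rnk a) (rev a))
    (M : Equiv.Perm (Fin n)) :
    (∀ P : Fin n → (Fin n ≃ Fin n), HQCompletion rev rnk P → ParetoOptimal P M) ↔
      ∃ σ : Equiv.Perm (Fin n),
        ∀ P : Fin n → (Fin n ≃ Fin n), HQCompletion rev rnk P → IsSD P σ M :=
  npo_hybrid_iff_serialDictatorship_general rev rnk M
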